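/- arXiv:2304.14802 — 2 statements merged into one kernel-verified Lean document; each statement's English description precedes it below -/
import Mathlib

section
/- For all N ≥ 2 and 1 ≤ k ≤ N−1, the ResiDual gradient-norm estimate max{(1/2)^{(N−k)/2}·e^{√(N−k)}, √(log(N−k+1)/N)} is bounded below by 1/√N, uniformly in k; in particular it does not tend to 0 exponentially fast in N − k for fixed N. -/
theorem stmt_10 (N k : ℕ) (hN : 2 ≤ N) (hk1 : 1 ≤ k) (hk2 : k ≤ N - 1) :
    1 / Real.sqrt N ≤
      max (((1 : ℝ) / 2) ^ (((N : ℝ) - k) / 2) * Real.exp (Real.sqrt ((N : ℝ) - k)))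
        (Real.sqrt (Real.log ((N : ℝ) - k + 1) / N)) := by
  have hNpos : (0:ℝ) < N := by positivity
  have hN1 : (1:ℝ) ≤ Real.sqrt N := by
    rw [show (1:ℝ) = Real.sqrt 1 by simp]
    exact Real.sqrt_le_sqrt (by exact_mod_cast Nat.one_le_of_lt hN)
  have hkN : k + 1 ≤ N := by omega
  have hx1 : (1:ℝ) ≤ (N:ℝ) - k := by
    have : (k:ℝ) + 1 ≤ N := by exact_mod_cast hkN
    linarith
  have hle : 1 / Real.sqrt N ≤ 1 := by
    rw [div_le_one (by positivity)]; exact hN1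
  rcases le_or_gt 2 ((N:ℝ) - k) with hx2 | hx2
  · -- use the second branch
    refine le_trans ?_ (le_max_right _ _)
    have hlog : (1:ℝ) ≤ Real.log ((N:ℝ) - k + 1) := by
      rw [Real.le_log_iff_exp_le (by linarith)]
      have := Real.exp_one_lt_d9
      linarith
    have h1 : (1:ℝ) / N ≤ Real.log ((N:ℝ) - k + 1) / N := by gcongr
    calc 1 / Real.sqrt N = Real.sqrt (1 / N) := by
          rw [one_div, one_div, Real.sqrt_inv]
      _ ≤ _ := Real.sqrt_le_sqrt h1
  · -- N - k = 1: use the first branch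
    have hx : (N:ℝ) - k = 1 := by
      have h : k + 1 = N ∨ k + 2 ≤ N := by omega
      rcases h with h | h
      · have : (k:ℝ) + 1 = N := by exact_mod_cast h
        linarith
      · exfalso
        have : (k:ℝ) + 2 ≤ N := by exact_mod_cast h
        linarith
    refine le_trans ?_ (le_max_left _ _)
    rw [hx]
    have hpow : ((1:ℝ)/2) ^ ((1:ℝ)/2) = Real.sqrt (1/2) := by
      rw [Real.sqrt_eq_rpow]
    have hsq : (1:ℝ)/2 ≤ Real.sqrt (1/2) := by
      nlinarith [Real.sq_sqrt (show (0:ℝ) ≤ 1/2 by norm_num),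
        Real.sqrt_nonneg ((1:ℝ)/2)]
    have hexp : (2:ℝ) ≤ Real.exp (Real.sqrt 1) := by
      rw [Real.sqrt_one]
      have := Real.exp_one_gt_d9
      linarith
    have h1 : (1:ℝ) ≤ ((1:ℝ)/2) ^ ((1:ℝ)/2) * Real.exp (Real.sqrt 1) := by
      rw [hpow]
      calc (1:ℝ) = (1/2) * 2 := by norm_num
        _ ≤ Real.sqrt (1/2) * Real.exp (Real.sqrt 1) := by
            apply mul_le_mul hsq hexp (by norm_num) (Real.sqrt_nonneg _)
    exact hle.trans h1
end

section
/- Let A, B be d×d complex matrices and n ≥ 2, and let M be the nd×nd block matrix with B in every diagonal block and A in every off-diagonal block. Then the spectral norm (largest singular value) of M equals max(‖B + (n−1)A‖₂, ‖B − A‖₂), provided A and B are simultaneously such that M is normal (e.g. A, B Hermitian). -/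
open Finset WithLp
open scoped InnerProductSpace

/-!
On `n` copies of `V`, the operator `T` with `B` in every diagonal block and `A` in every
off-diagonal block acts on the constant vectors `(v, …, v)` as `B + (n - 1) A`, and on the vectors
whose blocks sum to zero blockwise as `B - A`. These two `T`-invariant subspaces are orthogonal
complements, so `‖T‖` is the larger of the two restricted norms. The first is `‖B + (n - 1) A‖`
because `v ↦ (v, …, v)` scales norms by `√n`; the second is `‖B - A‖`, the lower bound coming from
the vectors `(v, -v, 0, …, 0)`.
-/

theorem norm_add_le_of_inner_eq_zero {𝕜 E : Type*} [RCLike 𝕜] [NormedAddCommGroup E]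
    [InnerProductSpace 𝕜 E] {x y u v : E} {K : ℝ} (hK : 0 ≤ K) (hxy : ⟪x, y⟫_𝕜 = 0)
    (huv : ⟪u, v⟫_𝕜 = 0) (hu : ‖u‖ ≤ K * ‖x‖) (hv : ‖v‖ ≤ K * ‖y‖) :
    ‖u + v‖ ≤ K * ‖x + y‖ := by
  refine (pow_le_pow_iff_left₀ (norm_nonneg _) (by positivity) two_ne_zero).mp ?_
  rw [mul_pow, sq, sq ‖x + y‖, norm_add_sq_eq_norm_sq_add_norm_sq_of_inner_eq_zero x y hxy,
    norm_add_sq_eq_norm_sq_add_norm_sq_of_inner_eq_zero u v huv]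
  have := mul_le_mul hu hu (norm_nonneg _) (by positivity)
  have := mul_le_mul hv hv (norm_nonneg _) (by positivity)
  nlinarith

theorem ContinuousLinearMap.opNorm_le_of_semiconj {𝕜 E F : Type*} [NontriviallyNormedField 𝕜]
    [NormedAddCommGroup E] [NormedSpace 𝕜 E] [NormedAddCommGroup F] [NormedSpace 𝕜 F]
    {S : F →L[𝕜] F} {T : E →L[𝕜] E} {f : F → E} {k : ℝ} (hk : 0 < k)
    (hf : ∀ v, ‖f v‖ = k * ‖v‖) (hfST : Function.Semiconj f S T) : ‖S‖ ≤ ‖T‖ := by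
  refine S.opNorm_le_bound (norm_nonneg T) fun v => le_of_mul_le_mul_left ?_ hk
  calc k * ‖S v‖ = ‖T (f v)‖ := by rw [← hf, hfST v]
    _ ≤ ‖T‖ * ‖f v‖ := T.le_opNorm _
    _ = k * (‖T‖ * ‖v‖) := by rw [hf]; ring

namespace PiLp

variable {V ι : Type*} [SeminormedAddCommGroup V] [Fintype ι]

theorem norm_toLp_const_two (v : V) :
    ‖toLp 2 (Function.const ι v)‖ = √(Fintype.card ι) * ‖v‖ := by
  rw [PiLp.norm_toLp_const (by simp)]
  simp [Real.sqrt_eq_rpow]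

theorem norm_single_sub_single [DecidableEq ι] {i j : ι} (hij : i ≠ j) (v : V) :
    ‖(single 2 i v - single 2 j v : PiLp 2 (fun _ : ι => V))‖ = √2 * ‖v‖ := by
  rw [← Real.sqrt_sq (norm_nonneg _), norm_sq_eq_of_L2, Fintype.sum_eq_add i j hij]
  · simp [hij, hij.symm, ← two_mul]
  · rintro k ⟨hki, hkj⟩
    simp [hki, hkj]

theorem inner_toLp_const_eq_zero {𝕜 E : Type*} [RCLike 𝕜] [NormedAddCommGroup E]
    [InnerProductSpace 𝕜 E] {y : PiLp 2 (fun _ : ι => E)} (hy : ∑ i, y i = 0) (v : E) :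
    ⟪toLp 2 (Function.const ι v), y⟫_𝕜 = 0 := by
  simp [PiLp.inner_apply, ← inner_sum, hy]

end PiLp

namespace ContinuousLinearMap

variable {𝕜 V ι : Type*} [RCLike 𝕜] [Fintype ι] [DecidableEq ι]

section Normed

variable [NormedAddCommGroup V] [NormedSpace 𝕜 V]

def HasUniformBlocks (T : PiLp 2 (fun _ : ι => V) →L[𝕜] PiLp 2 (fun _ : ι => V))
    (B A : V →L[𝕜] V) : Prop :=
  ∀ y i, T y i = B (y i) + ∑ j ∈ univ.erase i, A (y j)

namespace HasUniformBlocks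

variable {T : PiLp 2 (fun _ : ι => V) →L[𝕜] PiLp 2 (fun _ : ι => V)} {B A : V →L[𝕜] V}

theorem apply_eq (hT : T.HasUniformBlocks B A) (y : PiLp 2 (fun _ : ι => V)) (i : ι) :
    T y i = (B - A) (y i) + A (∑ j, y j) := by
  rw [hT, ← add_sum_erase _ _ (mem_univ i), map_add, map_sum, _root_.sub_apply]
  abel

theorem apply_toLp_const (hT : T.HasUniformBlocks B A) (v : V) :
    T (toLp 2 (Function.const ι v)) =
      toLp 2 (Function.const ι ((B + ((Fintype.card ι : 𝕜) - 1) • A) v)) := by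
  ext i
  rw [hT.apply_eq]
  simp [sub_smul, ← Nat.cast_smul_eq_nsmul 𝕜]
  abel

theorem apply_of_sum_eq_zero (hT : T.HasUniformBlocks B A) {y : PiLp 2 (fun _ : ι => V)}
    (hy : ∑ j, y j = 0) (i : ι) : T y i = (B - A) (y i) := by
  rw [hT.apply_eq, hy, map_zero, add_zero]

theorem sum_apply_of_sum_eq_zero (hT : T.HasUniformBlocks B A) {y : PiLp 2 (fun _ : ι => V)}
    (hy : ∑ j, y j = 0) : ∑ i, T y i = 0 := by
  simp_rw [hT.apply_of_sum_eq_zero hy, ← map_sum, hy, map_zero]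

theorem norm_apply_le_of_sum_eq_zero (hT : T.HasUniformBlocks B A)
    {y : PiLp 2 (fun _ : ι => V)} (hy : ∑ j, y j = 0) : ‖T y‖ ≤ ‖B - A‖ * ‖y‖ := by
  refine (pow_le_pow_iff_left₀ (norm_nonneg _) (by positivity) two_ne_zero).mp ?_
  rw [mul_pow, PiLp.norm_sq_eq_of_L2, PiLp.norm_sq_eq_of_L2, mul_sum]
  refine sum_le_sum fun i _ => ?_
  rw [hT.apply_of_sum_eq_zero hy, ← mul_pow]
  exact pow_le_pow_left₀ (norm_nonneg _) ((B - A).le_opNorm _) 2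

theorem norm_add_smul_le (hT : T.HasUniformBlocks B A) [Nonempty ι] :
    ‖B + ((Fintype.card ι : 𝕜) - 1) • A‖ ≤ ‖T‖ :=
  opNorm_le_of_semiconj (by positivity) PiLp.norm_toLp_const_two
    fun v => (hT.apply_toLp_const v).symm

theorem norm_sub_le (hT : T.HasUniformBlocks B A) {i j : ι} (hij : i ≠ j) :
    ‖B - A‖ ≤ ‖T‖ := by
  have hf := PiLp.norm_single_sub_single (V := V) hij
  refine opNorm_le_of_semiconj (by positivity) hf fun v => ?_
  have hsum : ∑ k, (PiLp.single 2 i v - PiLp.single 2 j v : PiLp 2 (fun _ : ι => V)) k = 0 := by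
    simp
  ext k
  rw [hT.apply_of_sum_eq_zero hsum]
  simp only [PiLp.sub_apply, map_sub, PiLp.ofLp_single]
  rw [Pi.apply_single (fun _ => ⇑(B - A)) (fun _ => map_zero _),
    Pi.apply_single (fun _ => ⇑(B - A)) (fun _ => map_zero _)]

end HasUniformBlocks
end Normed

namespace HasUniformBlocks

variable [NormedAddCommGroup V] [InnerProductSpace 𝕜 V]
  {T : PiLp 2 (fun _ : ι => V) →L[𝕜] PiLp 2 (fun _ : ι => V)} {B A : V →L[𝕜] V}

theorem norm_le_max (hT : T.HasUniformBlocks B A) [Nonempty ι] :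
    ‖T‖ ≤ max ‖B + ((Fintype.card ι : 𝕜) - 1) • A‖ ‖B - A‖ := by
  refine T.opNorm_le_bound (by positivity) fun x => ?_
  set c : V := (Fintype.card ι : 𝕜)⁻¹ • ∑ i, x i
  set x₀ : PiLp 2 (fun _ : ι => V) := toLp 2 (Function.const ι c)
  have hx₁ : ∑ i, (x - x₀) i = 0 := by
    simp [x₀, c, sum_sub_distrib, ← Nat.cast_smul_eq_nsmul 𝕜]
  have hx : x = x₀ + (x - x₀) := by abel
  rw [hx, map_add]
  refine norm_add_le_of_inner_eq_zero (by positivity)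
    (PiLp.inner_toLp_const_eq_zero (𝕜 := 𝕜) hx₁ c) ?_ ?_ ?_
  · rw [hT.apply_toLp_const]
    exact PiLp.inner_toLp_const_eq_zero (hT.sum_apply_of_sum_eq_zero hx₁) _
  · rw [hT.apply_toLp_const, PiLp.norm_toLp_const_two, PiLp.norm_toLp_const_two, mul_left_comm]
    gcongr
    exact (le_opNorm _ c).trans (by gcongr; exact le_max_left _ _)
  · exact (hT.norm_apply_le_of_sum_eq_zero hx₁).trans (by gcongr; exact le_max_right _ _)

theorem norm_eq_max (hT : T.HasUniformBlocks B A) [Nontrivial ι] :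
    ‖T‖ = max ‖B + ((Fintype.card ι : 𝕜) - 1) • A‖ ‖B - A‖ :=
  have ⟨_, _, hij⟩ := exists_pair_ne ι
  hT.norm_le_max.antisymm (max_le hT.norm_add_smul_le (hT.norm_sub_le hij))

end HasUniformBlocks
end ContinuousLinearMap

namespace EuclideanSpace

variable (𝕜 ι κ : Type*) [RCLike 𝕜] [Fintype ι] [Fintype κ]

noncomputable def prodEquivPiLp :
    EuclideanSpace 𝕜 (ι × κ) ≃ₗᵢ[𝕜] PiLp 2 (fun _ : ι => EuclideanSpace 𝕜 κ) :=
  (LinearIsometryEquiv.piLpCongrLeft 2 𝕜 𝕜 (Equiv.sigmaEquivProd ι κ).symm).trans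
    (LinearIsometryEquiv.piLpCurry 𝕜 2 fun _ _ => 𝕜)

end EuclideanSpace

namespace Matrix

variable {𝕜 ι κ : Type*} [RCLike 𝕜] [Fintype ι] [Fintype κ] [DecidableEq ι] [DecidableEq κ]

noncomputable def toBlockEuclideanCLM (M : Matrix (ι × κ) (ι × κ) 𝕜) :
    PiLp 2 (fun _ : ι => EuclideanSpace 𝕜 κ) →L[𝕜] PiLp 2 (fun _ : ι => EuclideanSpace 𝕜 κ) :=
  (EuclideanSpace.prodEquivPiLp 𝕜 ι κ : _ →L[𝕜] _) ∘L toEuclideanCLM (𝕜 := 𝕜) M ∘L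
    ((EuclideanSpace.prodEquivPiLp 𝕜 ι κ).symm : _ →L[𝕜] _)

theorem norm_toBlockEuclideanCLM (M : Matrix (ι × κ) (ι × κ) 𝕜) :
    ‖toBlockEuclideanCLM M‖ = ‖toEuclideanCLM (𝕜 := 𝕜) M‖ := by
  rw [toBlockEuclideanCLM, ContinuousLinearMap.opNorm_linearIsometryEquiv_comp,
    ContinuousLinearMap.opNorm_comp_linearIsometryEquiv]

theorem hasUniformBlocks_toBlockEuclideanCLM {A B : Matrix κ κ 𝕜}
    {M : Matrix (ι × κ) (ι × κ) 𝕜}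
    (hM : ∀ i j a b, M (i, a) (j, b) = if i = j then B a b else A a b) :
    (toBlockEuclideanCLM M).HasUniformBlocks (toEuclideanCLM (𝕜 := 𝕜) B)
      (toEuclideanCLM (𝕜 := 𝕜) A) := by
  intro y i
  ext a
  change ∑ p, M (i, a) p * y p.1 p.2 = _
  rw [Fintype.sum_prod_type, ← add_sum_erase _ _ (mem_univ i)]
  simp only [hM, PiLp.add_apply, WithLp.ofLp_sum, Finset.sum_apply]
  congr 1
  exact sum_congr rfl fun j hj => by simp [(ne_of_mem_erase hj).symm, mulVec, dotProduct]

end Matrix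

theorem stmt_12_general (d n : ℕ) (hn : 2 ≤ n) (A B : Matrix (Fin d) (Fin d) ℂ)
    (M : Matrix (Fin n × Fin d) (Fin n × Fin d) ℂ)
    (hM : ∀ i j : Fin n, ∀ a b : Fin d,
      M (i, a) (j, b) = if i = j then B a b else A a b) :
    ‖Matrix.toEuclideanCLM (𝕜 := ℂ) M‖ =
      max ‖Matrix.toEuclideanCLM (𝕜 := ℂ) (B + ((n : ℂ) - 1) • A)‖
        ‖Matrix.toEuclideanCLM (𝕜 := ℂ) (B - A)‖ := by
  have : Nontrivial (Fin n) := Fin.nontrivial_iff_two_le.mpr hn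
  have h := (Matrix.hasUniformBlocks_toBlockEuclideanCLM hM).norm_eq_max
  simpa [Matrix.norm_toBlockEuclideanCLM] using h

theorem stmt_12 (d n : ℕ) (hn : 2 ≤ n) (A B : Matrix (Fin d) (Fin d) ℂ)
    (M : Matrix (Fin n × Fin d) (Fin n × Fin d) ℂ)
    (hM : ∀ i j : Fin n, ∀ a b : Fin d,
      M (i, a) (j, b) = if i = j then B a b else A a b)
    (hnormal : IsStarNormal M) :
    ‖Matrix.toEuclideanCLM (𝕜 := ℂ) M‖ =
      max ‖Matrix.toEuclideanCLM (𝕜 := ℂ) (B + ((n : ℂ) - 1) • A)‖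
        ‖Matrix.toEuclideanCLM (𝕜 := ℂ) (B - A)‖ :=
  stmt_12_general d n hn A B M hM
end
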